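/- Subtyping is monotone in positive annotations: if φ and ψ are substitutions with αφ ≤∞ αψ for every size variable α, and every size variable occurs only positively in the annotated type T, then Tφ ≤ Tψ. -/
import Mathlib


/-- The successor size algebra: free term algebra over variables `V`,
constants `C` and one unary symbol `succ`. -/
inductive SizeTerm (V C : Type) : Type
  | var : V → SizeTerm V C
  | const : C → SizeTerm V C
  | succ : SizeTerm V C → SizeTerm V C

namespace SizeTerm

variable {V C : Type}

/-- The strict order `⊏`: transitive closure of the relation relating `a` to `succ a`. -/
def slt (a b : SizeTerm V C) : Prop :=
  Relation.TransGen (fun x y => y = SizeTerm.succ x) a b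

/-- The order `⊑`: reflexive closure of `⊏`. -/
def sle (a b : SizeTerm V C) : Prop := a = b ∨ slt a b

/-- The set of variables of a size expression. -/
def vars : SizeTerm V C → Set V
  | .var v => {v}
  | .const _ => ∅
  | .succ a => vars a

end SizeTerm

/-- The top-extension `ōA` of the successor algebra: `none` stands for `∞`. -/
abbrev OTerm (V C : Type) : Type := Option (SizeTerm V C)

variable {V C : Type}

/-- `a ≤∞ b` iff `b = ∞`, or both are finite and `a ⊑ b`. -/
def leInf (x y : OTerm V C) : Prop :=
  y = none ∨ ∃ a b, x = some a ∧ y = some b ∧ SizeTerm.sle a b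

/-- Action of a substitution on a finite size expression: the result is `∞`
as soon as some variable is mapped to `∞`. -/
def subst (φ : V → OTerm V C) : SizeTerm V C → OTerm V C
  | .var v => φ v
  | .const c => some (.const c)
  | .succ a => Option.map SizeTerm.succ (subst φ a)

/-- Action of a substitution on the top-extension: `∞φ = ∞`. -/
def substInf (φ : V → OTerm V C) : OTerm V C → OTerm V C
  | none => none
  | some a => subst φ a

/-- Variables of an element of the top-extension. -/
def varsInf : OTerm V C → Set V
  | none => ∅
  | some a => a.vars

/-- Annotated types over a set `S` of sorts and a set `A` of size annotations. -/
inductive ATy (S A : Type) : Type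
  | base : S → A → ATy S A
  | arrow : ATy S A → ATy S A → ATy S A

/-- The subtyping relation generated by (size), (prod), (refl) and (trans). -/
inductive Subty {S A : Type} (leA : A → A → Prop) : ATy S A → ATy S A → Prop
  | size {B : S} {a b : A} : leA a b → Subty leA (.base B a) (.base B b)
  | prod {U V U' V' : ATy S A} :
      Subty leA U' U → Subty leA V V' → Subty leA (.arrow U V) (.arrow U' V')
  | refl (T : ATy S A) : Subty leA T T
  | trans {T U V : ATy S A} : Subty leA T U → Subty leA U V → Subty leA T V

/-- Action of a substitution on an annotated type (acting on annotations). -/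
def substATy {S : Type} (φ : V → OTerm V C) : ATy S (OTerm V C) → ATy S (OTerm V C)
  | .base B a => .base B (substInf φ a)
  | .arrow U W => .arrow (substATy φ U) (substATy φ W)

mutual
  /-- `α` has a positive occurrence in the annotated type: every occurrence in
  the annotation of a base type is positive. -/
  def occursPos {S : Type} (α : V) : ATy S (OTerm V C) → Prop
    | .base _ a => α ∈ varsInf a
    | .arrow U W => occursNeg α U ∨ occursPos α W

  /-- `α` has a negative occurrence in the annotated type. -/
  def occursNeg {S : Type} (α : V) : ATy S (OTerm V C) → Prop
    | .base _ _ => False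
    | .arrow U W => occursPos α U ∨ occursNeg α W
end

lemma SizeTerm.slt_succ {a b : SizeTerm V C} (h : SizeTerm.slt a b) :
    SizeTerm.slt a.succ b.succ := by
  induction h with
  | single h => exact Relation.TransGen.single (by rw [h])
  | tail _ h ih => exact ih.tail (by rw [h])

lemma SizeTerm.sle_succ {a b : SizeTerm V C} (h : SizeTerm.sle a b) :
    SizeTerm.sle a.succ b.succ := by
  rcases h with h | h
  · exact Or.inl (by rw [h])
  · exact Or.inr (SizeTerm.slt_succ h)

lemma leInf_map_succ {x y : OTerm V C} (h : leInf x y) :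
    leInf (Option.map SizeTerm.succ x) (Option.map SizeTerm.succ y) := by
  rcases h with h | ⟨a, b, rfl, rfl, hab⟩
  · subst h; exact Or.inl rfl
  · exact Or.inr ⟨a.succ, b.succ, rfl, rfl, SizeTerm.sle_succ hab⟩

lemma leInf_subst (φ ψ : V → OTerm V C) (h : ∀ α, leInf (φ α) (ψ α)) :
    ∀ a : SizeTerm V C, leInf (subst φ a) (subst ψ a)
  | .var v => h v
  | .const c => Or.inr ⟨_, _, rfl, rfl, Or.inl rfl⟩
  | .succ a => leInf_map_succ (leInf_subst φ ψ h a)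

lemma subst_eq_of_no_vars (φ ψ : V → OTerm V C) (a : SizeTerm V C)
    (h : ∀ α, α ∉ a.vars) : subst φ a = subst ψ a := by
  induction a with
  | var v => exact absurd rfl (h v)
  | const c => rfl
  | succ a ih => simpa [subst] using congrArg (Option.map SizeTerm.succ) (ih h)

lemma substATy_mono {S : Type} (φ ψ : V → OTerm V C)
    (h : ∀ α, leInf (φ α) (ψ α)) :
    ∀ T : ATy S (OTerm V C),
      ((∀ α, ¬ occursNeg α T) → Subty leInf (substATy φ T) (substATy ψ T)) ∧
      ((∀ α, ¬ occursPos α T) → Subty leInf (substATy ψ T) (substATy φ T))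
  | .base B a => by
    constructor
    · intro _
      cases a with
      | none => exact Subty.size (Or.inl rfl)
      | some a => exact Subty.size (leInf_subst φ ψ h a)
    · intro hp
      cases a with
      | none => exact Subty.refl _
      | some a =>
        have := subst_eq_of_no_vars φ ψ a (fun α => hp α)
        simp only [substATy, substInf, this]
        exact Subty.refl _
  | .arrow U W => by
    obtain ⟨hU1, hU2⟩ := substATy_mono φ ψ h U
    obtain ⟨hW1, hW2⟩ := substATy_mono φ ψ h W
    constructor
    · intro hn
      exact Subty.prod (hU2 fun α hα => hn α (Or.inl hα))
        (hW1 fun α hα => hn α (Or.inr hα))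
    · intro hp
      exact Subty.prod (hU1 fun α hα => hp α (Or.inl hα))
        (hW2 fun α hα => hp α (Or.inr hα))

/-- Subtyping is monotone in positive annotations: if `αφ ≤∞ αψ` for every size
variable `α`, and every size variable occurs only positively in `T`, then
`Tφ ≤ Tψ`. -/
theorem subtype_mono_of_positive
    (V C S : Type) (φ ψ : V → OTerm V C)
    (h : ∀ α, leInf (φ α) (ψ α))
    (T : ATy S (OTerm V C)) (hT : ∀ α, ¬ occursNeg α T) :
    Subty leInf (substATy φ T) (substATy ψ T) := by
  exact (substATy_mono φ ψ h T).1 hT
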